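/- (Lipschitz continuity in J) For every finite Δ ⊂ ℤ^d and every R > 0 there exist positive constants Θ₁(Δ, R), Θ₂(Δ, R) such that for all J, J′ ∈ 𝒥_q with ‖J‖_q ≤ R and ‖J′‖_q ≤ R, every bounded continuous f : ℝ^{ℤ^d} → ℝ, and every ξ ∈ 𝒮_p, one has |∫ f(σ) π_Δ(dσ|J,ξ) − ∫ f(σ) π_Δ(dσ|J′,ξ)| ≤ ‖J − J′‖_q · ‖f‖_∞ · (Θ₁(Δ, R) + Θ₂(Δ, R)‖ξ‖_p^p). -/

import Mathlib

open MeasureTheory ENNReal Filter Topology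

noncomputable section

/-- The lattice `ℤ^d`. -/
abbrev Site (d : ℕ) : Type := Fin d → ℤ

/-- Spin configurations `ℝ^{ℤ^d}` (product topology, product σ-field). -/
abbrev Config (d : ℕ) : Type := Site d → ℝ

/-- An edge of `ℤ^d`, encoded by its lower endpoint `x` and a direction `i`:
it joins `x` and `x + eᵢ`.  Every nearest-neighbour edge has a unique such encoding. -/
abbrev Edge (d : ℕ) : Type := Site d × Fin d

namespace Paper

/-- the σ-field `ℬ(𝒫(·))` (for a Polish state space it coincides with the Borel σ-field
of the weak topology). -/
instance instMeasurableSpaceProbabilityMeasure {Ω : Type*} [MeasurableSpace Ω] :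
    MeasurableSpace (ProbabilityMeasure Ω) := by
  unfold ProbabilityMeasure; infer_instance

variable (d : ℕ)

/-- the `i`-th unit vector of `ℤ^d` -/
def unitv (i : Fin d) : Site d := fun j => if j = i then 1 else 0

/-- the second endpoint of an edge -/
def ept (e : Edge d) : Site d := e.1 + unitv d e.2

/-- the neighbours of a site (the `y` with `|x - y| = 1`) -/
def nbrs (x : Site d) : Finset (Site d) :=
  (Finset.univ.image fun i : Fin d => x + unitv d i) ∪
    (Finset.univ.image fun i : Fin d => x - unitv d i)

/-- the edges incident to a site -/
def nbrEdges (x : Site d) : Finset (Edge d) :=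
  (Finset.univ.image fun i : Fin d => ((x, i) : Edge d)) ∪
    (Finset.univ.image fun i : Fin d => ((x - unitv d i, i) : Edge d))

/-- the edges having at least one endpoint in `Δ` -/
def edgesIn (Δ : Finset (Site d)) : Finset (Edge d) := Δ.biUnion (nbrEdges d)

/-- the outer boundary `∂Δ` -/
def bdry (Δ : Finset (Site d)) : Finset (Site d) := (Δ.biUnion (nbrs d)) \ Δ

/-- the configuration `σ_Δ × ξ_{Δᶜ}` -/
def glue (Δ : Finset (Site d)) (σ : (x : Δ) → ℝ) (ξ : Config d) : Config d :=
  fun x => if h : x ∈ Δ then σ ⟨x, h⟩ else ξ x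

/-- minus the interaction energy, `-H_Δ(σ_Δ | J, ξ)` -/
def energy (Δ : Finset (Site d)) (J : Edge d → ℝ) (σ : (x : Δ) → ℝ) (ξ : Config d) : ℝ :=
  ∑ e ∈ edgesIn d Δ, J e * glue d Δ σ ξ e.1 * glue d Δ σ ξ (ept d e)

variable (χ : Site d → Measure ℝ) [∀ x, SigmaFinite (χ x)]

/-- the product reference measure `⊗_{x ∈ Δ} χ_x` on `ℝ^Δ` -/
def refMeas (Δ : Finset (Site d)) : Measure ((x : Δ) → ℝ) := Measure.pi fun x : Δ => χ x.1

/-- the partition function `Z_Δ(J, ξ)` -/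
def Zpart (Δ : Finset (Site d)) (J : Edge d → ℝ) (ξ : Config d) : ℝ≥0∞ :=
  ∫⁻ σ, ENNReal.ofReal (Real.exp (energy d Δ J σ ξ)) ∂(refMeas d χ Δ)

/-- the local (conditional) Gibbs measure `π_Δ(·|J,ξ)` on `ℝ^{ℤ^d}` -/
def gibbsKernel (Δ : Finset (Site d)) (J : Edge d → ℝ) (ξ : Config d) : Measure (Config d) :=
  (Zpart d χ Δ J ξ)⁻¹ •
    Measure.map (fun σ => glue d Δ σ ξ)
      ((refMeas d χ Δ).withDensity fun σ => ENNReal.ofReal (Real.exp (energy d Δ J σ ξ)))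

open scoped Classical in
/-- `π_Δ(·|J,ξ)` as an element of `𝒫(ℝ^{ℤ^d})`; under the standing assumptions the
local Gibbs measure is indeed a probability measure, so the `dite` branch is the real one. -/
def gibbsPK (Δ : Finset (Site d)) (J : Edge d → ℝ) (ξ : Config d) :
    ProbabilityMeasure (Config d) :=
  if h : IsProbabilityMeasure (gibbsKernel d χ Δ J ξ) then ⟨gibbsKernel d χ Δ J ξ, h⟩
  else ⟨Measure.dirac 0, by infer_instance⟩

variable (w : Site d → ℝ) (p q : ℝ)

/-- `‖σ‖_p^p` -/
def pnormP (σ : Config d) : ℝ := ∑' x, |σ x| ^ p * w x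

/-- the set `𝒮_p` of tempered configurations -/
def SpSet : Set (Config d) := {σ : Config d | Summable fun x => |σ x| ^ p * w x}

/-- the weight `w x + w y` attached to an edge -/
def eWt (e : Edge d) : ℝ := w e.1 + w (ept d e)

/-- `‖J‖_q^q` -/
def JnormQ (J : Edge d → ℝ) : ℝ := ∑' e, |J e| ^ q * eWt d w e

/-- the set `𝒥_q` of tempered interactions -/
def JqSet : Set (Edge d → ℝ) := {J : Edge d → ℝ | Summable fun e => |J e| ^ q * eWt d w e}

/-- `𝒥_q` as a (measurable) space: its Borel σ-field coincides with the trace of the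
product σ-field of `ℝ^E`. -/
abbrev JqT : Type := {J : Edge d → ℝ // Summable fun e => |J e| ^ q * eWt d w e}

/-- `C₊(λ) = sup_x ∫ exp(λ|u|^p) χ_x(du)` -/
def Cplus (l : ℝ) : ℝ≥0∞ := ⨆ x : Site d, ∫⁻ u, ENNReal.ofReal (Real.exp (l * |u| ^ p)) ∂(χ x)

/-- `C₋(λ) = inf_x ∫ exp(-λ|u|^p) χ_x(du)` -/
def Cminus (l : ℝ) : ℝ≥0∞ := ⨅ x : Site d, ∫⁻ u, ENNReal.ofReal (Real.exp (-(l * |u| ^ p))) ∂(χ x)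

/-- the set `𝒢_p(J)` of tempered Gibbs measures -/
def GibbsSet (J : Edge d → ℝ) : Set (ProbabilityMeasure (Config d)) :=
  {μ : ProbabilityMeasure (Config d) |
    (μ : Measure (Config d)) (SpSet d w p) = 1 ∧
      ∀ (Δ : Finset (Site d)) (A : Set (Config d)), MeasurableSet A →
        ∫⁻ ξ, (gibbsKernel d χ Δ J ξ) A ∂(μ : Measure (Config d)) = (μ : Measure (Config d)) A}

/-- the local pressure `p_Δ(J,ξ)` -/
def pressure (Δ : Finset (Site d)) (J : Edge d → ℝ) (ξ : Config d) : ℝ :=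
  ((Δ.card : ℝ))⁻¹ * Real.log (Zpart d χ Δ J ξ).toReal

/-- `p̄^μ_Δ(J)` -/
def pbar (Δ : Finset (Site d)) (μ : Measure (Config d)) (J : Edge d → ℝ) : ℝ :=
  ∫ ξ, pressure d χ Δ J ξ ∂μ

/-- a cofinal (exhausting, increasing) sequence of finite volumes -/
def Cofinal (D : ℕ → Finset (Site d)) : Prop :=
  (∀ n, (D n).Nonempty) ∧ (∀ n, D n ⊆ D (n + 1)) ∧ ∀ x : Site d, ∃ n, x ∈ D n

/-- a random Gibbs measure -/
def IsRandomGibbs (ν : Measure (JqT d w q)) (μm : JqT d w q → ProbabilityMeasure (Config d)) :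
    Prop :=
  Measurable μm ∧ ∀ᵐ J ∂ν, μm J ∈ GibbsSet d χ w p J.1

end Paper

open Paper

/-! Write `μ = ⊗_{x ∈ Δ} χ_x`, `P(σ) = ∑_{x ∈ Δ} |σ(x)|^p` and `Q = ∑ |ξ(x)|^p` over the sites
touched by the edges at `Δ`, so that `∫ f dπ_Δ(·|J,ξ) = ∫ F e^{-H_J} dμ / ∫ e^{-H_J} dμ` with
`|F| ≤ ‖f‖_∞`. A single term of `‖K‖_q^q` gives `|K_e| ≤ ‖K‖_q (w(x) + w(y))^{-1/q}`, and
`|ab| ≤ 1 + max(|a|, |b|)^p` for `p ≥ 2`, so `|H_K| ≤ ‖K‖_q c_Δ (1 + Q + P)`. As `H` is linear in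
`J`, the two Gibbs averages differ by at most `4 ‖f‖_∞ ‖J - J'‖_q c_Δ (1 + Q + ⟨P⟩)`, where `⟨P⟩`
bounds the means of `P` under both Gibbs measures. The crux is that `⟨P⟩` can be taken linear in
`Q`: with `λ ≥ R c_Δ`, Jensen gives `exp ⟨P⟩ ≤ ⟨e^P⟩ ≤ e^{2λ(1+Q)} (C₊(λ+1) / C₋(λ))^{|Δ|}`, the
exponential moments of the `χ_x` bounding the numerator from above and the partition function
from below. -/

lemma abs_exp_sub_exp_le (a b : ℝ) :
    |Real.exp a - Real.exp b| ≤ |a - b| * (Real.exp a + Real.exp b) := by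
  wlog hba : b ≤ a generalizing a b
  · rw [abs_sub_comm, abs_sub_comm a, add_comm]
    exact this b a (le_of_not_ge hba)
  have h := mul_le_mul_of_nonneg_right (Real.add_one_le_exp (b - a)) (Real.exp_pos a).le
  rw [← Real.exp_add, sub_add_cancel] at h
  rw [abs_of_nonneg (sub_nonneg.2 (Real.exp_le_exp.2 hba)), abs_of_nonneg (sub_nonneg.2 hba)]
  nlinarith [Real.exp_pos b]

lemma sq_le_one_add_rpow {p t : ℝ} (hp : 2 ≤ p) (ht : 0 ≤ t) : t ^ 2 ≤ 1 + t ^ p := by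
  rcases le_total t 1 with h | h
  · nlinarith [Real.rpow_nonneg ht p]
  · have := Real.rpow_le_rpow_of_exponent_le h hp
    rw [Real.rpow_two] at this
    linarith

lemma abs_mul_le_one_add_of_rpow_le {p S a b : ℝ} (hp : 2 ≤ p) (ha : |a| ^ p ≤ S)
    (hb : |b| ^ p ≤ S) : |a * b| ≤ 1 + S := by
  have := sq_le_one_add_rpow hp (abs_nonneg a)
  have := sq_le_one_add_rpow hp (abs_nonneg b)
  rw [abs_mul]
  nlinarith [sq_nonneg (|a| - |b|)]

lemma abs_sub_rpow_le (a b : ℝ) {q : ℝ} (hq : 0 ≤ q) :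
    |a - b| ^ q ≤ 2 ^ q * (|a| ^ q + |b| ^ q) := by
  wlog hab : |b| ≤ |a| generalizing a b
  · rw [abs_sub_comm, add_comm]
    exact this b a (le_of_not_ge hab)
  calc |a - b| ^ q ≤ (2 * |a|) ^ q :=
        Real.rpow_le_rpow (abs_nonneg _) ((abs_sub a b).trans (by linarith)) hq
    _ = 2 ^ q * |a| ^ q := Real.mul_rpow zero_le_two (abs_nonneg a)
    _ ≤ 2 ^ q * (|a| ^ q + |b| ^ q) := by
        gcongr
        exact le_add_of_nonneg_right (Real.rpow_nonneg (abs_nonneg b) q)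

lemma exp_neg_mul_abs_rpow_le_one {l p : ℝ} (hl : 0 ≤ l) (u : ℝ) :
    Real.exp (-l * |u| ^ p) ≤ 1 :=
  Real.exp_le_one_iff.2 (by rw [neg_mul]; exact neg_nonpos.2 (by positivity))

lemma abs_div_sub_div_le {N N' Z Z' M E : ℝ} (hZ : 0 < Z) (hZ' : 0 < Z')
    (hN' : |N'| ≤ M * Z') (hN : |N - N'| ≤ M * E) (hZE : |Z - Z'| ≤ E) :
    |N / Z - N' / Z'| ≤ 2 * M * E / Z := by
  have hM : |N' / Z'| ≤ M := by
    rwa [abs_div, abs_of_pos hZ', div_le_iff₀ hZ']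
  rw [show N / Z - N' / Z' = ((N - N') + N' / Z' * (Z' - Z)) / Z by field_simp; ring,
    abs_div, abs_of_pos hZ]
  gcongr
  calc |N - N' + N' / Z' * (Z' - Z)| ≤ |N - N'| + |N' / Z'| * |Z' - Z| := by
        rw [← abs_mul]; exact abs_add_le _ _
    _ ≤ M * E + M * E := by
        rw [abs_sub_comm Z']
        gcongr
        exact (abs_nonneg _).trans hM
    _ = 2 * M * E := by ring

section WeightedAverage

variable {α : Type*} [MeasurableSpace α] {μ : Measure α}

/-- Jensen's inequality for `exp` and the probability density `ρ / ∫ ρ`, through the tangent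
line `exp m * (1 + t - m) ≤ exp t` at the mean `m` of `P`. -/
lemma exp_integral_div_mul_le {P ρ : α → ℝ} (hρ : ∀ x, 0 ≤ ρ x) (hρi : Integrable ρ μ)
    (hPρ : Integrable (fun x => P x * ρ x) μ)
    (hePρ : Integrable (fun x => Real.exp (P x) * ρ x) μ) (hZ : 0 < ∫ x, ρ x ∂μ) :
    Real.exp ((∫ x, P x * ρ x ∂μ) / ∫ x, ρ x ∂μ) * ∫ x, ρ x ∂μ
      ≤ ∫ x, Real.exp (P x) * ρ x ∂μ := by
  set Z := ∫ x, ρ x ∂μ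
  set m := (∫ x, P x * ρ x ∂μ) / Z
  have hmZ : m * Z = ∫ x, P x * ρ x ∂μ := div_mul_cancel₀ _ hZ.ne'
  have htangent : ∀ x, Real.exp m * ((1 - m) * ρ x + P x * ρ x) ≤ Real.exp (P x) * ρ x := by
    intro x
    have h := mul_le_mul_of_nonneg_right (Real.add_one_le_exp (P x - m)) (hρ x)
    rw [Real.exp_sub] at h
    calc Real.exp m * ((1 - m) * ρ x + P x * ρ x) = Real.exp m * ((P x - m + 1) * ρ x) := by
          ring
      _ ≤ Real.exp m * (Real.exp (P x) / Real.exp m * ρ x) := by gcongr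
      _ = Real.exp (P x) * ρ x := by field_simp
  calc Real.exp m * Z = ∫ x, Real.exp m * ((1 - m) * ρ x + P x * ρ x) ∂μ := by
        rw [integral_const_mul, integral_add (hρi.const_mul _) hPρ, integral_const_mul, ← hmZ]
        ring
    _ ≤ ∫ x, Real.exp (P x) * ρ x ∂μ :=
        integral_mono (((hρi.const_mul _).add hPρ).const_mul _) hePρ htangent

lemma abs_integral_div_sub_integral_div_le {F ρ ρ' : α → ℝ} {M D : ℝ}
    (hF : AEStronglyMeasurable F μ) (hFM : ∀ x, |F x| ≤ M)
    (hρ : ∀ x, 0 ≤ ρ x) (hρ' : ∀ x, 0 ≤ ρ' x) (hρi : Integrable ρ μ) (hρi' : Integrable ρ' μ)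
    (hZ : 0 < ∫ x, ρ x ∂μ) (hZ' : 0 < ∫ x, ρ' x ∂μ)
    (hD : ∫ x, |ρ x - ρ' x| ∂μ ≤ D * (∫ x, ρ x ∂μ + ∫ x, ρ' x ∂μ)) :
    |(∫ x, F x * ρ x ∂μ) / (∫ x, ρ x ∂μ) - (∫ x, F x * ρ' x ∂μ) / ∫ x, ρ' x ∂μ|
      ≤ 4 * M * D := by
  wlog hZZ' : ∫ x, ρ' x ∂μ ≤ ∫ x, ρ x ∂μ generalizing ρ ρ'
  · rw [abs_sub_comm]
    refine this hρ' hρ hρi' hρi hZ' hZ ?_ (le_of_not_ge hZZ')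
    simpa only [abs_sub_comm (ρ' _), add_comm (∫ x, ρ' x ∂μ)] using hD
  have hFbdd : ∀ᵐ x ∂μ, ‖F x‖ ≤ M := ae_of_all _ hFM
  have hFρ := hρi.bdd_mul hF hFbdd
  have hFρ' := hρi'.bdd_mul hF hFbdd
  have hN' : |∫ x, F x * ρ' x ∂μ| ≤ M * ∫ x, ρ' x ∂μ := by
    rw [← integral_const_mul]
    refine abs_integral_le_integral_abs.trans (integral_mono hFρ'.abs (hρi'.const_mul M) ?_)
    intro x
    dsimp only
    rw [abs_mul, abs_of_nonneg (hρ' x)]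
    exact mul_le_mul_of_nonneg_right (hFM x) (hρ' x)
  have hNN' : |∫ x, F x * ρ x ∂μ - ∫ x, F x * ρ' x ∂μ| ≤ M * ∫ x, |ρ x - ρ' x| ∂μ := by
    rw [← integral_sub hFρ hFρ', ← integral_const_mul]
    refine abs_integral_le_integral_abs.trans
      (integral_mono (hFρ.sub hFρ').abs ((hρi.sub hρi').abs.const_mul M) ?_)
    intro x
    dsimp only
    rw [← mul_sub, abs_mul]
    exact mul_le_mul_of_nonneg_right (hFM x) (abs_nonneg _)
  have hZZ : |∫ x, ρ x ∂μ - ∫ x, ρ' x ∂μ| ≤ ∫ x, |ρ x - ρ' x| ∂μ := by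
    rw [← integral_sub hρi hρi']
    exact abs_integral_le_integral_abs
  have hD0 : 0 ≤ D := nonneg_of_mul_nonneg_left
    ((integral_nonneg fun x => abs_nonneg _).trans hD) (add_pos hZ hZ')
  have hM : 0 ≤ M := nonneg_of_mul_nonneg_left ((abs_nonneg _).trans hN') hZ'
  calc _ ≤ 2 * M * (∫ x, |ρ x - ρ' x| ∂μ) / ∫ x, ρ x ∂μ := abs_div_sub_div_le hZ hZ' hN' hNN' hZZ
    _ ≤ 2 * M * (D * (∫ x, ρ x ∂μ + ∫ x, ρ x ∂μ)) / ∫ x, ρ x ∂μ := by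
        gcongr
        exact hD.trans (by gcongr)
    _ = 4 * M * D := by field_simp; ring

end WeightedAverage

section ExponentialDensity

lemma exp_mul_exp_le_of_abs_le {α : Type*} {P H : α → ℝ} {lam B : ℝ}
    (hH : ∀ x, |H x| ≤ lam * (B + P x)) (x : α) :
    Real.exp (P x) * Real.exp (H x) ≤ Real.exp (lam * B) * Real.exp ((lam + 1) * P x) := by
  rw [← Real.exp_add, ← Real.exp_add, Real.exp_le_exp]
  linarith [(abs_le.1 (hH x)).2]

variable {α : Type*} [MeasurableSpace α] {μ : Measure α} {P H : α → ℝ} {lam B : ℝ}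
  (hPm : Measurable P) (hHm : Measurable H) (hP : ∀ x, 0 ≤ P x)
  (hH : ∀ x, |H x| ≤ lam * (B + P x))
  (hA : Integrable (fun x => Real.exp ((lam + 1) * P x)) μ)
include hPm hHm hH hA

lemma integrable_exp_mul_exp_of_abs_le :
    Integrable (fun x => Real.exp (P x) * Real.exp (H x)) μ := by
  refine (hA.const_mul (Real.exp (lam * B))).mono' (by fun_prop) (ae_of_all _ fun x => ?_)
  rw [Real.norm_of_nonneg (by positivity)]
  exact exp_mul_exp_le_of_abs_le hH x

include hP

lemma integrable_exp_of_abs_le : Integrable (fun x => Real.exp (H x)) μ := by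
  refine (integrable_exp_mul_exp_of_abs_le hPm hHm hH hA).mono' (by fun_prop)
    (ae_of_all _ fun x => ?_)
  rw [Real.norm_of_nonneg (Real.exp_pos _).le]
  exact le_mul_of_one_le_left (Real.exp_pos _).le (Real.one_le_exp (hP x))

lemma integrable_mul_exp_of_abs_le : Integrable (fun x => P x * Real.exp (H x)) μ := by
  refine (integrable_exp_mul_exp_of_abs_le hPm hHm hH hA).mono' (by fun_prop)
    (ae_of_all _ fun x => ?_)
  rw [Real.norm_of_nonneg (mul_nonneg (hP x) (Real.exp_pos _).le)]
  gcongr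
  linarith [Real.add_one_le_exp (P x)]

lemma exp_neg_mul_integral_le_integral_exp
    (hA' : Integrable (fun x => Real.exp (-lam * P x)) μ) :
    Real.exp (-(lam * B)) * ∫ x, Real.exp (-lam * P x) ∂μ ≤ ∫ x, Real.exp (H x) ∂μ := by
  rw [← integral_const_mul]
  refine integral_mono (hA'.const_mul _) (integrable_exp_of_abs_le hPm hHm hP hH hA) fun x => ?_
  dsimp only
  rw [← Real.exp_add, Real.exp_le_exp]
  linarith [(abs_le.1 (hH x)).1]

lemma integral_mul_exp_le_of_abs_le {A a : ℝ} (hAle : ∫ x, Real.exp ((lam + 1) * P x) ∂μ ≤ A)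
    (hA' : Integrable (fun x => Real.exp (-lam * P x)) μ) (ha : 0 < a)
    (hale : a ≤ ∫ x, Real.exp (-lam * P x) ∂μ) :
    ∫ x, P x * Real.exp (H x) ∂μ ≤ (2 * lam * B + Real.log (A / a)) * ∫ x, Real.exp (H x) ∂μ := by
  set Z := ∫ x, Real.exp (H x) ∂μ
  set m := (∫ x, P x * Real.exp (H x) ∂μ) / Z
  have hZ : Real.exp (-(lam * B)) * a ≤ Z :=
    (mul_le_mul_of_nonneg_left hale (Real.exp_pos _).le).trans
      (exp_neg_mul_integral_le_integral_exp hPm hHm hP hH hA hA')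
  have hZ0 : 0 < Z := lt_of_lt_of_le (by positivity) hZ
  have hjensen : Real.exp m * Z ≤ Real.exp (lam * B) * A := by
    refine (exp_integral_div_mul_le (fun x => (Real.exp_pos _).le)
      (integrable_exp_of_abs_le hPm hHm hP hH hA) (integrable_mul_exp_of_abs_le hPm hHm hP hH hA)
      (integrable_exp_mul_exp_of_abs_le hPm hHm hH hA) hZ0).trans ?_
    calc ∫ x, Real.exp (P x) * Real.exp (H x) ∂μ
        ≤ ∫ x, Real.exp (lam * B) * Real.exp ((lam + 1) * P x) ∂μ :=
          integral_mono (integrable_exp_mul_exp_of_abs_le hPm hHm hH hA) (hA.const_mul _)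
            (exp_mul_exp_le_of_abs_le hH)
      _ ≤ Real.exp (lam * B) * A := by rw [integral_const_mul]; gcongr
  have hA0 : 0 < A := by
    have := (mul_pos (Real.exp_pos m) hZ0).trans_le hjensen
    exact pos_of_mul_pos_right this (Real.exp_pos _).le
  have hm : m ≤ 2 * lam * B + Real.log (A / a) := by
    rw [← sub_le_iff_le_add', Real.le_log_iff_exp_le (div_pos hA0 ha), le_div_iff₀ ha]
    have hexp : Real.exp (m - 2 * lam * B) = Real.exp (-(lam * B)) * Real.exp m
        * Real.exp (-(lam * B)) := by
      rw [← Real.exp_add, ← Real.exp_add]; ring_nf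
    calc Real.exp (m - 2 * lam * B) * a
        = Real.exp (-(lam * B)) * (Real.exp m * (Real.exp (-(lam * B)) * a)) := by
          rw [hexp]; ring
      _ ≤ Real.exp (-(lam * B)) * (Real.exp (lam * B) * A) :=
          mul_le_mul_of_nonneg_left
            ((mul_le_mul_of_nonneg_left hZ (Real.exp_pos m).le).trans hjensen)
            (Real.exp_pos _).le
      _ = A := by rw [← mul_assoc, ← Real.exp_add]; simp
  calc ∫ x, P x * Real.exp (H x) ∂μ = m * Z := (div_mul_cancel₀ _ hZ0.ne').symm
    _ ≤ (2 * lam * B + Real.log (A / a)) * Z := mul_le_mul_of_nonneg_right hm hZ0.le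

lemma abs_integral_mul_exp_div_sub_le {H' F : α → ℝ} {A a M ε : ℝ} (hH'm : Measurable H')
    (hH' : ∀ x, |H' x| ≤ lam * (B + P x)) (hAle : ∫ x, Real.exp ((lam + 1) * P x) ∂μ ≤ A)
    (hA' : Integrable (fun x => Real.exp (-lam * P x)) μ) (ha : 0 < a)
    (hale : a ≤ ∫ x, Real.exp (-lam * P x) ∂μ)
    (hF : AEStronglyMeasurable F μ) (hFM : ∀ x, |F x| ≤ M)
    (hε : 0 ≤ ε) (hHH' : ∀ x, |H x - H' x| ≤ ε * (B + P x)) :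
    |(∫ x, F x * Real.exp (H x) ∂μ) / (∫ x, Real.exp (H x) ∂μ)
        - (∫ x, F x * Real.exp (H' x) ∂μ) / ∫ x, Real.exp (H' x) ∂μ|
      ≤ 4 * M * (ε * (B + (2 * lam * B + Real.log (A / a)))) := by
  have hZ : ∀ {G : α → ℝ}, Measurable G → (∀ x, |G x| ≤ lam * (B + P x)) →
      0 < ∫ x, Real.exp (G x) ∂μ := fun hGm hG =>
    lt_of_lt_of_le (by positivity) ((mul_le_mul_of_nonneg_left hale (Real.exp_pos _).le).trans
      (exp_neg_mul_integral_le_integral_exp hPm hGm hP hG hA hA'))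
  have hρ := integrable_exp_of_abs_le hPm hHm hP hH hA
  have hρ' := integrable_exp_of_abs_le hPm hH'm hP hH' hA
  have hPρ := integrable_mul_exp_of_abs_le hPm hHm hP hH hA
  have hPρ' := integrable_mul_exp_of_abs_le hPm hH'm hP hH' hA
  have hρρ' : Integrable (fun x => Real.exp (H x) + Real.exp (H' x)) μ := hρ.add hρ'
  have hPρρ' : Integrable (fun x => P x * Real.exp (H x) + P x * Real.exp (H' x)) μ :=
    hPρ.add hPρ'
  refine abs_integral_div_sub_integral_div_le hF hFM (fun x => (Real.exp_pos _).le)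
    (fun x => (Real.exp_pos _).le) hρ hρ' (hZ hHm hH) (hZ hH'm hH') ?_
  calc ∫ x, |Real.exp (H x) - Real.exp (H' x)| ∂μ
      ≤ ∫ x, ε * B * (Real.exp (H x) + Real.exp (H' x))
          + ε * (P x * Real.exp (H x) + P x * Real.exp (H' x)) ∂μ := by
        refine integral_mono (hρ.sub hρ').abs
          ((hρρ'.const_mul _).add (hPρρ'.const_mul _)) fun x => ?_
        calc |Real.exp (H x) - Real.exp (H' x)|
            ≤ |H x - H' x| * (Real.exp (H x) + Real.exp (H' x)) := abs_exp_sub_exp_le _ _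
          _ ≤ ε * (B + P x) * (Real.exp (H x) + Real.exp (H' x)) := by gcongr; exact hHH' x
          _ = _ := by ring
    _ = ε * B * (∫ x, Real.exp (H x) ∂μ + ∫ x, Real.exp (H' x) ∂μ)
          + ε * (∫ x, P x * Real.exp (H x) ∂μ + ∫ x, P x * Real.exp (H' x) ∂μ) := by
        rw [integral_add (hρρ'.const_mul _) (hPρρ'.const_mul _),
          integral_const_mul, integral_const_mul, integral_add hρ hρ', integral_add hPρ hPρ']
    _ ≤ ε * B * (∫ x, Real.exp (H x) ∂μ + ∫ x, Real.exp (H' x) ∂μ)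
          + ε * ((2 * lam * B + Real.log (A / a)) * ∫ x, Real.exp (H x) ∂μ
            + (2 * lam * B + Real.log (A / a)) * ∫ x, Real.exp (H' x) ∂μ) := by
        gcongr
        · exact integral_mul_exp_le_of_abs_le hPm hHm hP hH hA hAle hA' ha hale
        · exact integral_mul_exp_le_of_abs_le hPm hH'm hP hH' hA hAle hA' ha hale
    _ = _ := by ring

end ExponentialDensity

section ProductMeasure

variable {ι : Type*} [Fintype ι] {ν : ι → Measure ℝ} [∀ i, SigmaFinite (ν i)] {g : ℝ → ℝ}
  {r : ℝ}

lemma exp_mul_sum_eq_prod (σ : ι → ℝ) :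
    Real.exp (r * ∑ i, g (σ i)) = ∏ i, Real.exp (r * g (σ i)) := by
  rw [Finset.mul_sum, Real.exp_sum]

lemma integrable_exp_mul_sum (h : ∀ i, Integrable (fun u => Real.exp (r * g u)) (ν i)) :
    Integrable (fun σ : ι → ℝ => Real.exp (r * ∑ i, g (σ i))) (Measure.pi ν) := by
  simp_rw [exp_mul_sum_eq_prod]
  exact Integrable.fintype_prod h

lemma integral_exp_mul_sum_le {C : ℝ} (hC : ∀ i, ∫ u, Real.exp (r * g u) ∂ν i ≤ C) :
    ∫ σ, Real.exp (r * ∑ i, g (σ i)) ∂Measure.pi ν ≤ C ^ Fintype.card ι := by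
  simp_rw [exp_mul_sum_eq_prod]
  rw [integral_fintype_prod_eq_prod (fun _ u => Real.exp (r * g u)), ← Finset.card_univ,
    ← Finset.prod_const]
  exact Finset.prod_le_prod (fun i _ => integral_nonneg fun _ => (Real.exp_pos _).le)
    fun i _ => hC i

lemma pow_card_le_integral_exp_mul_sum {c : ℝ} (hc : 0 ≤ c)
    (hC : ∀ i, c ≤ ∫ u, Real.exp (r * g u) ∂ν i) :
    c ^ Fintype.card ι ≤ ∫ σ, Real.exp (r * ∑ i, g (σ i)) ∂Measure.pi ν := by
  simp_rw [exp_mul_sum_eq_prod]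
  rw [integral_fintype_prod_eq_prod (fun _ u => Real.exp (r * g u)), ← Finset.card_univ,
    ← Finset.prod_const]
  exact Finset.prod_le_prod (fun _ _ => hc) fun i _ => hC i

end ProductMeasure

namespace Paper

variable {d : ℕ}

lemma measurable_glue (Δ : Finset (Site d)) (ξ : Config d) :
    Measurable fun σ : (x : Δ) → ℝ => glue d Δ σ ξ := by
  refine measurable_pi_lambda _ fun y => ?_
  by_cases h : y ∈ Δ
  · simpa [glue, h] using measurable_pi_apply (⟨y, h⟩ : Δ)
  · simp [glue, h]

lemma measurable_energy (Δ : Finset (Site d)) (K : Edge d → ℝ) (ξ : Config d) :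
    Measurable fun σ : (x : Δ) → ℝ => energy d Δ K σ ξ := by
  have hglue := measurable_glue Δ ξ
  unfold energy
  fun_prop

lemma energy_sub (Δ : Finset (Site d)) (J J' : Edge d → ℝ) (σ : (x : Δ) → ℝ) (ξ : Config d) :
    energy d Δ (J - J') σ ξ = energy d Δ J σ ξ - energy d Δ J' σ ξ := by
  simp only [energy, ← Finset.sum_sub_distrib, Pi.sub_apply, sub_mul]

def edgeSites (Δ : Finset (Site d)) : Finset (Site d) :=
  (edgesIn d Δ).image Prod.fst ∪ (edgesIn d Δ).image (ept d)

lemma abs_glue_rpow_le {Δ S : Finset (Site d)} {y : Site d} (hy : y ∈ S) (σ : (x : Δ) → ℝ)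
    (ξ : Config d) (p : ℝ) :
    |glue d Δ σ ξ y| ^ p ≤ ∑ x ∈ S, |ξ x| ^ p + ∑ x : Δ, |σ x| ^ p := by
  have hσ : 0 ≤ ∑ x : Δ, |σ x| ^ p := Finset.sum_nonneg fun _ _ => by positivity
  have hξ : 0 ≤ ∑ x ∈ S, |ξ x| ^ p := Finset.sum_nonneg fun _ _ => by positivity
  by_cases h : y ∈ Δ
  · simp only [glue, h, dite_true]
    have := Finset.single_le_sum (f := fun x : Δ => |σ x| ^ p)
      (fun _ _ => by positivity) (Finset.mem_univ ⟨y, h⟩)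
    linarith
  · simp only [glue, h, dite_false]
    have := Finset.single_le_sum (f := fun x => |ξ x| ^ p) (fun _ _ => by positivity) hy
    linarith

lemma abs_energy_le {p : ℝ} (hp : 2 ≤ p) (Δ : Finset (Site d)) (K : Edge d → ℝ)
    (σ : (x : Δ) → ℝ) (ξ : Config d) :
    |energy d Δ K σ ξ| ≤ (∑ e ∈ edgesIn d Δ, |K e|)
      * ((1 + ∑ x ∈ edgeSites Δ, |ξ x| ^ p) + ∑ x : Δ, |σ x| ^ p) := by
  rw [Finset.sum_mul]
  refine (Finset.abs_sum_le_sum_abs _ _).trans (Finset.sum_le_sum fun e he => ?_)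
  have hfst : e.1 ∈ edgeSites Δ := Finset.mem_union_left _ (Finset.mem_image_of_mem _ he)
  have hept : ept d e ∈ edgeSites Δ := Finset.mem_union_right _ (Finset.mem_image_of_mem _ he)
  rw [mul_assoc, abs_mul, add_assoc]
  gcongr
  exact abs_mul_le_one_add_of_rpow_le hp (abs_glue_rpow_le hfst σ ξ p)
    (abs_glue_rpow_le hept σ ξ p)

variable {w : Site d → ℝ} {p q : ℝ}

lemma eWt_pos (hw : ∀ x, 0 < w x) (e : Edge d) : 0 < eWt d w e := add_pos (hw _) (hw _)

lemma JnormQ_nonneg (hw : ∀ x, 0 < w x) (K : Edge d → ℝ) : 0 ≤ JnormQ d w q K :=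
  tsum_nonneg fun e => mul_nonneg (by positivity) (eWt_pos hw e).le

lemma JnormQ_rpow_le (hw : ∀ x, 0 < w x) (hq : 0 < q) {K : Edge d → ℝ} {R : ℝ} (hR : 0 ≤ R)
    (hK : JnormQ d w q K ≤ R ^ q) : JnormQ d w q K ^ (1 / q) ≤ R :=
  calc JnormQ d w q K ^ (1 / q) ≤ (R ^ q) ^ (1 / q) :=
        Real.rpow_le_rpow (JnormQ_nonneg hw K) hK (by positivity)
    _ = R := by rw [← Real.rpow_mul hR, mul_one_div_cancel hq.ne', Real.rpow_one]

lemma sub_mem_JqSet (hw : ∀ x, 0 < w x) (hq : 0 ≤ q) {J J' : Edge d → ℝ} (hJ : J ∈ JqSet d w q)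
    (hJ' : J' ∈ JqSet d w q) : J - J' ∈ JqSet d w q := by
  refine Summable.of_nonneg_of_le (fun e => mul_nonneg (by positivity) (eWt_pos hw e).le)
    (fun e => ?_) ((hJ.add hJ').mul_left (2 ^ q))
  rw [← add_mul, ← mul_assoc]
  exact mul_le_mul_of_nonneg_right (abs_sub_rpow_le (J e) (J' e) hq) (eWt_pos hw e).le

lemma abs_le_JnormQ_rpow_mul (hw : ∀ x, 0 < w x) (hq : 0 < q) {K : Edge d → ℝ}
    (hK : K ∈ JqSet d w q) (e : Edge d) :
    |K e| ≤ JnormQ d w q K ^ (1 / q) * (eWt d w e ^ (1 / q))⁻¹ := by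
  have hterm : |K e| ^ q * eWt d w e ≤ JnormQ d w q K :=
    hK.le_tsum e fun j _ => mul_nonneg (by positivity) (eWt_pos hw j).le
  rw [← div_eq_mul_inv, ← Real.div_rpow (JnormQ_nonneg hw K) (eWt_pos hw e).le,
    ← Real.rpow_rpow_inv (abs_nonneg (K e)) hq.ne', one_div]
  gcongr
  rwa [le_div_iff₀ (eWt_pos hw e)]

def couplingSum (w : Site d → ℝ) (q : ℝ) (Δ : Finset (Site d)) : ℝ :=
  ∑ e ∈ edgesIn d Δ, (eWt d w e ^ (1 / q))⁻¹

lemma couplingSum_nonneg (hw : ∀ x, 0 < w x) (Δ : Finset (Site d)) : 0 ≤ couplingSum w q Δ :=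
  Finset.sum_nonneg fun e _ => by have := eWt_pos hw e; positivity

lemma sum_abs_le_JnormQ_rpow_mul (hw : ∀ x, 0 < w x) (hq : 0 < q) {K : Edge d → ℝ}
    (hK : K ∈ JqSet d w q) (Δ : Finset (Site d)) :
    ∑ e ∈ edgesIn d Δ, |K e| ≤ JnormQ d w q K ^ (1 / q) * couplingSum w q Δ := by
  rw [couplingSum, Finset.mul_sum]
  exact Finset.sum_le_sum fun e _ => abs_le_JnormQ_rpow_mul hw hq hK e

lemma sum_abs_rpow_le_mul_pnormP (hw : ∀ x, 0 < w x) {ξ : Config d} (hξ : ξ ∈ SpSet d w p)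
    (S : Finset (Site d)) : ∑ x ∈ S, |ξ x| ^ p ≤ (∑ x ∈ S, (w x)⁻¹) * pnormP d w p ξ := by
  rw [Finset.sum_mul]
  refine Finset.sum_le_sum fun x _ => ?_
  rw [← div_eq_inv_mul, le_div_iff₀ (hw x)]
  exact hξ.le_tsum x fun j _ => mul_nonneg (by positivity) (hw j).le

lemma pnormP_nonneg (hw : ∀ x, 0 < w x) (ξ : Config d) : 0 ≤ pnormP d w p ξ :=
  tsum_nonneg fun x => mul_nonneg (by positivity) (hw x).le

section SingleSite

variable (χ : Site d → Measure ℝ) {l : ℝ}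

lemma integrable_exp_mul_abs_rpow (hCp : Cplus d χ p l < ⊤) (x : Site d) :
    Integrable (fun u => Real.exp (l * |u| ^ p)) (χ x) := by
  refine (lintegral_ofReal_ne_top_iff_integrable (Measurable.aestronglyMeasurable (by fun_prop))
    (ae_of_all _ fun _ => (Real.exp_pos _).le)).1 ?_
  exact ((le_iSup (fun x => ∫⁻ u, ENNReal.ofReal (Real.exp (l * |u| ^ p)) ∂χ x) x).trans_lt
    hCp).ne

lemma integral_exp_mul_abs_rpow_le (hCp : Cplus d χ p l < ⊤) (x : Site d) :
    ∫ u, Real.exp (l * |u| ^ p) ∂χ x ≤ (Cplus d χ p l).toReal := by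
  rw [integral_eq_lintegral_of_nonneg_ae (ae_of_all _ fun _ => (Real.exp_pos _).le)
    (Measurable.aestronglyMeasurable (by fun_prop))]
  exact ENNReal.toReal_mono hCp.ne
    (le_iSup (fun x => ∫⁻ u, ENNReal.ofReal (Real.exp (l * |u| ^ p)) ∂χ x) x)

variable [∀ x, IsProbabilityMeasure (χ x)]

lemma Cminus_le_one (hl : 0 ≤ l) : Cminus d χ p l ≤ 1 := by
  refine (iInf_le _ 0).trans ((lintegral_mono fun u => ?_).trans_eq (lintegral_one.trans
    measure_univ))
  rw [← neg_mul]
  exact ENNReal.ofReal_le_one.2 (exp_neg_mul_abs_rpow_le_one hl u)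

lemma integrable_exp_neg_mul_abs_rpow (hl : 0 ≤ l) (x : Site d) :
    Integrable (fun u => Real.exp (-l * |u| ^ p)) (χ x) :=
  Integrable.of_bound (Measurable.aestronglyMeasurable (by fun_prop)) 1 (ae_of_all _ fun u => by
    rw [Real.norm_of_nonneg (Real.exp_pos _).le]; exact exp_neg_mul_abs_rpow_le_one hl u)

lemma Cminus_toReal_le_integral (hl : 0 ≤ l) (x : Site d) :
    (Cminus d χ p l).toReal ≤ ∫ u, Real.exp (-l * |u| ^ p) ∂χ x := by
  refine ENNReal.toReal_le_of_le_ofReal (integral_nonneg fun _ => (Real.exp_pos _).le) ?_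
  rw [ofReal_integral_eq_lintegral_ofReal (integrable_exp_neg_mul_abs_rpow χ hl x)
    (ae_of_all _ fun _ => (Real.exp_pos _).le)]
  simp only [Cminus, neg_mul]
  exact iInf_le (fun x => ∫⁻ u, ENNReal.ofReal (Real.exp (-(l * |u| ^ p))) ∂χ x) x

lemma Cminus_toReal_pos (hl : 0 ≤ l) (hCm : 0 < Cminus d χ p l) : 0 < (Cminus d χ p l).toReal :=
  ENNReal.toReal_pos hCm.ne' ((Cminus_le_one χ hl).trans_lt ENNReal.one_lt_top).ne

end SingleSite

lemma integral_gibbsKernel (χ : Site d → Measure ℝ) [∀ x, SigmaFinite (χ x)]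
    {Δ : Finset (Site d)} {K : Edge d → ℝ} {ξ : Config d}
    (hρ : Integrable (fun σ => Real.exp (energy d Δ K σ ξ)) (refMeas d χ Δ))
    {g : Config d → ℝ} (hg : Measurable g) :
    ∫ σ, g σ ∂gibbsKernel d χ Δ K ξ
      = (∫ σ, g (glue d Δ σ ξ) * Real.exp (energy d Δ K σ ξ) ∂refMeas d χ Δ)
          / ∫ σ, Real.exp (energy d Δ K σ ξ) ∂refMeas d χ Δ := by
  have hZ : Zpart d χ Δ K ξ = ENNReal.ofReal (∫ σ, Real.exp (energy d Δ K σ ξ) ∂refMeas d χ Δ) :=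
    (ofReal_integral_eq_lintegral_ofReal hρ (ae_of_all _ fun _ => (Real.exp_pos _).le)).symm
  rw [gibbsKernel, integral_smul_measure,
    integral_map (measurable_glue Δ ξ).aemeasurable hg.aestronglyMeasurable, hZ,
    ENNReal.toReal_inv, ENNReal.toReal_ofReal (integral_nonneg fun _ => (Real.exp_pos _).le)]
  simp_rw [ENNReal.ofReal]
  rw [integral_withDensity_eq_integral_smul (measurable_energy Δ K ξ).exp.real_toNNReal]
  simp_rw [NNReal.smul_def, smul_eq_mul, Real.coe_toNNReal _ (Real.exp_pos _).le, mul_comm,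
    ← div_eq_inv_mul]

lemma abs_integral_gibbsKernel_sub_le (χ : Site d → Measure ℝ) [∀ x, IsProbabilityMeasure (χ x)]
    (hw : ∀ x, 0 < w x) (hq : 0 < q) (hp : 2 ≤ p) {lam : ℝ} (hlam : 0 < lam)
    (hCp : Cplus d χ p (lam + 1) < ⊤) (hCm : 0 < Cminus d χ p lam) {Δ : Finset (Site d)}
    {J J' : Edge d → ℝ} (hJ : J ∈ JqSet d w q) (hJ' : J' ∈ JqSet d w q)
    (hJlam : JnormQ d w q J ^ (1 / q) * couplingSum w q Δ ≤ lam)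
    (hJ'lam : JnormQ d w q J' ^ (1 / q) * couplingSum w q Δ ≤ lam)
    (f : BoundedContinuousFunction (Config d) ℝ) (ξ : Config d) :
    |(∫ σ, f σ ∂gibbsKernel d χ Δ J ξ) - ∫ σ, f σ ∂gibbsKernel d χ Δ J' ξ|
      ≤ 4 * ‖f‖ * (JnormQ d w q (J - J') ^ (1 / q) * couplingSum w q Δ
        * ((1 + ∑ x ∈ edgeSites Δ, |ξ x| ^ p) + (2 * lam * (1 + ∑ x ∈ edgeSites Δ, |ξ x| ^ p)
          + Real.log ((Cplus d χ p (lam + 1)).toReal ^ Δ.card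
            / (Cminus d χ p lam).toReal ^ Δ.card)))) := by
  have hP : ∀ σ : (x : Δ) → ℝ, 0 ≤ ∑ x : Δ, |σ x| ^ p :=
    fun σ => Finset.sum_nonneg fun _ _ => by positivity
  have hPm : Measurable fun σ : (x : Δ) → ℝ => ∑ x : Δ, |σ x| ^ p := by fun_prop
  have hH : ∀ {K : Edge d → ℝ} {ε : ℝ}, K ∈ JqSet d w q →
      JnormQ d w q K ^ (1 / q) * couplingSum w q Δ ≤ ε → ∀ σ, |energy d Δ K σ ξ|
        ≤ ε * ((1 + ∑ x ∈ edgeSites Δ, |ξ x| ^ p) + ∑ x : Δ, |σ x| ^ p) :=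
    fun hK hKε σ => (abs_energy_le hp Δ _ σ ξ).trans (mul_le_mul_of_nonneg_right
      ((sum_abs_le_JnormQ_rpow_mul hw hq hK Δ).trans hKε) (by positivity))
  have hHH' : ∀ σ, |energy d Δ J σ ξ - energy d Δ J' σ ξ|
      ≤ JnormQ d w q (J - J') ^ (1 / q) * couplingSum w q Δ
        * ((1 + ∑ x ∈ edgeSites Δ, |ξ x| ^ p) + ∑ x : Δ, |σ x| ^ p) := fun σ => by
    rw [← energy_sub]
    exact hH (sub_mem_JqSet hw hq.le hJ hJ') le_rfl σ
  have hA : Integrable (fun σ : (x : Δ) → ℝ => Real.exp ((lam + 1) * ∑ x : Δ, |σ x| ^ p))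
      (refMeas d χ Δ) :=
    integrable_exp_mul_sum fun x : Δ => integrable_exp_mul_abs_rpow χ hCp x.1
  have hρ : ∀ {K : Edge d → ℝ}, K ∈ JqSet d w q →
      JnormQ d w q K ^ (1 / q) * couplingSum w q Δ ≤ lam →
      Integrable (fun σ => Real.exp (energy d Δ K σ ξ)) (refMeas d χ Δ) := fun hK hKlam =>
    integrable_exp_of_abs_le hPm (measurable_energy Δ _ ξ) hP (hH hK hKlam) hA
  have hε : 0 ≤ JnormQ d w q (J - J') ^ (1 / q) * couplingSum w q Δ :=
    mul_nonneg (Real.rpow_nonneg (JnormQ_nonneg hw _) _) (couplingSum_nonneg hw Δ)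
  rw [integral_gibbsKernel χ (hρ hJ hJlam) f.continuous.measurable,
    integral_gibbsKernel χ (hρ hJ' hJ'lam) f.continuous.measurable, ← Fintype.card_coe Δ]
  exact abs_integral_mul_exp_div_sub_le hPm (measurable_energy Δ J ξ) hP (hH hJ hJlam) hA
    (measurable_energy Δ J' ξ) (hH hJ' hJ'lam)
    (integral_exp_mul_sum_le fun x : Δ => integral_exp_mul_abs_rpow_le χ hCp x.1)
    (integrable_exp_mul_sum fun x : Δ => integrable_exp_neg_mul_abs_rpow χ hlam.le x.1)
    (pow_pos (Cminus_toReal_pos χ hlam.le hCm) _)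
    (pow_card_le_integral_exp_mul_sum ENNReal.toReal_nonneg
      fun x : Δ => Cminus_toReal_le_integral χ hlam.le x.1)
    (f.continuous.measurable.comp (measurable_glue Δ ξ)).aestronglyMeasurable
    (fun σ => f.norm_coe_le_norm _) hε hHH'

end Paper

theorem lipschitz_in_J_general (d : ℕ)
    (w : Site d → ℝ) (hw_pos : ∀ x, 0 < w x)
    (q p : ℝ) (hq : 1 < q) (hp : p = 2 * q / (q - 1))
    (χ : Site d → Measure ℝ) [∀ x, IsProbabilityMeasure (χ x)]
    (hCp : ∀ l : ℝ, 0 < l → Cplus d χ p l < ⊤)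
    (hCm : ∀ l : ℝ, 0 < l → 0 < Cminus d χ p l) :
    ∀ (Δ : Finset (Site d)) (R : ℝ), 0 < R → ∃ T₁ T₂ : ℝ, 0 < T₁ ∧ 0 < T₂ ∧
      ∀ J J' : Edge d → ℝ, J ∈ JqSet d w q → J' ∈ JqSet d w q →
        JnormQ d w q J ≤ R ^ q → JnormQ d w q J' ≤ R ^ q →
        ∀ f : BoundedContinuousFunction (Config d) ℝ, ∀ ξ ∈ SpSet d w p,
          |(∫ σ, f σ ∂(gibbsKernel d χ Δ J ξ)) - ∫ σ, f σ ∂(gibbsKernel d χ Δ J' ξ)|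
            ≤ (JnormQ d w q (J - J')) ^ (1 / q) * ‖f‖ * (T₁ + T₂ * pnormP d w p ξ) := by
  intro Δ R hR
  have hq0 : 0 < q := by linarith
  have hp2 : 2 ≤ p := by rw [hp, le_div_iff₀ (by linarith)]; linarith
  have hc := couplingSum_nonneg hw_pos Δ (q := q)
  set c := couplingSum w q Δ
  set lam := R * c + 1
  set Γ := Real.log ((Cplus d χ p (lam + 1)).toReal ^ Δ.card / (Cminus d χ p lam).toReal ^ Δ.card)
  set cT := ∑ x ∈ edgeSites Δ, (w x)⁻¹
  have hcT : 0 ≤ cT := Finset.sum_nonneg fun x _ => (inv_pos.2 (hw_pos x)).le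
  have hlam : 0 < lam := by positivity
  refine ⟨4 * c * (1 + 2 * lam + |Γ|) + 1, 4 * c * (1 + 2 * lam) * cT + 1, by positivity,
    by positivity, fun J J' hJ hJ' hJR hJ'R f ξ hξ => ?_⟩
  have hJlam : ∀ {K : Edge d → ℝ}, JnormQ d w q K ≤ R ^ q → JnormQ d w q K ^ (1 / q) * c ≤ lam :=
    fun hK => by linarith [mul_le_mul_of_nonneg_right (JnormQ_rpow_le hw_pos hq0 hR.le hK) hc]
  have hδ : 0 ≤ JnormQ d w q (J - J') ^ (1 / q) * ‖f‖ :=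
    mul_nonneg (Real.rpow_nonneg (JnormQ_nonneg hw_pos _) _) (norm_nonneg f)
  have hQ := sum_abs_rpow_le_mul_pnormP hw_pos hξ (edgeSites Δ)
  refine (abs_integral_gibbsKernel_sub_le χ hw_pos hq0 hp2 hlam (hCp _ (by positivity))
    (hCm _ hlam) hJ hJ' (hJlam hJR) (hJlam hJ'R) f ξ).trans ?_
  calc _ = JnormQ d w q (J - J') ^ (1 / q) * ‖f‖
        * (4 * c * (1 + 2 * lam + Γ) + 4 * c * (1 + 2 * lam) * ∑ x ∈ edgeSites Δ, |ξ x| ^ p) := by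
        ring
    _ ≤ _ := mul_le_mul_of_nonneg_left (by
        linarith [mul_le_mul_of_nonneg_left hQ (by positivity : 0 ≤ 4 * c * (1 + 2 * lam)),
          mul_le_mul_of_nonneg_left (le_abs_self Γ) hc, pnormP_nonneg hw_pos ξ (p := p)]) hδ

/-- Lemma 4.4 (Lipschitz continuity in `J`). -/
theorem lipschitz_in_J (d : ℕ) (hd : 0 < d)
    (w : Site d → ℝ) (hw_pos : ∀ x, 0 < w x) (hw_one : ∀ x, w x ≤ 1) (hw_sum : Summable w)
    (w₀ : ℝ) (hw₀ : 0 < w₀) (hw_nb : ∀ x : Site d, ∀ y ∈ nbrs d x, w x ≤ w₀ * w y)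
    (q p : ℝ) (hq : 1 < q) (hp : p = 2 * q / (q - 1))
    (χ : Site d → Measure ℝ) [∀ x, IsProbabilityMeasure (χ x)]
    (hCp : ∀ l : ℝ, 0 < l → Cplus d χ p l < ⊤)
    (hCm : ∀ l : ℝ, 0 < l → 0 < Cminus d χ p l) :
    ∀ (Δ : Finset (Site d)) (R : ℝ), 0 < R → ∃ T₁ T₂ : ℝ, 0 < T₁ ∧ 0 < T₂ ∧
      ∀ J J' : Edge d → ℝ, J ∈ JqSet d w q → J' ∈ JqSet d w q →
        JnormQ d w q J ≤ R ^ q → JnormQ d w q J' ≤ R ^ q →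
        ∀ f : BoundedContinuousFunction (Config d) ℝ, ∀ ξ ∈ SpSet d w p,
          |(∫ σ, f σ ∂(gibbsKernel d χ Δ J ξ)) - ∫ σ, f σ ∂(gibbsKernel d χ Δ J' ξ)|
            ≤ (JnormQ d w q (J - J')) ^ (1 / q) * ‖f‖ * (T₁ + T₂ * pnormP d w p ξ) :=
  lipschitz_in_J_general d w hw_pos q p hq hp χ hCp hCm
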